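/- Let f : W → ℝ be a continuous function, where W = (X×Y)ᴺ with the product topology for finite nonempty X, Y. Then the Blackwell game Γ(f) is determined: sup_σ inf_τ ∫ f dμ_{σ,τ} = inf_τ sup_σ ∫ f dμ_{σ,τ}. -/

import Mathlib

open MeasureTheory Filter

abbrev Play (Z : Type) : Type := ℕ → Z

abbrev Strategy (Z M : Type) : Type := List Z → PMF M

noncomputable def cylProb {X Y : Type} (σ : Strategy (X × Y) X)
    (τ : Strategy (X × Y) Y) (p : List (X × Y)) : ENNReal :=
  ∏ i : Fin p.length,
    σ (p.take i.1) (p.get i).1 * τ (p.take i.1) (p.get i).2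

def cyl {Z : Type} (p : List Z) : Set (Play Z) :=
  {w | ∀ i : Fin p.length, w i.1 = p.get i}

def IsInduced {X Y : Type} [MeasurableSpace X] [MeasurableSpace Y]
    (σ : Strategy (X × Y) X) (τ : Strategy (X × Y) Y)
    (μ : Measure (Play (X × Y))) : Prop :=
  IsProbabilityMeasure μ ∧ ∀ p : List (X × Y), μ (cyl p) = cylProb σ τ p

section Minimax

variable {X Y : Type} [Fintype X] [Nonempty X] [Fintype Y] [Nonempty Y]

/-- expected payoff of mixed strategies -/
noncomputable def pay (A : X → Y → ℝ) (x : X → ℝ) (y : Y → ℝ) : ℝ :=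
  ∑ z : X × Y, x z.1 * y z.2 * A z.1 z.2

lemma pay_eq (A : X → Y → ℝ) (x : X → ℝ) (y : Y → ℝ) :
    pay A x y = ∑ a, ∑ b, x a * y b * A a b := by
  rw [pay, Fintype.sum_prod_type]

/-- theorem of the alternative via separating hyperplanes -/
lemma alt (A : X → Y → ℝ) (c : ℝ)
    (h : ¬ ∃ y ∈ stdSimplex ℝ Y, ∀ a, (∑ b, y b * A a b) ≤ c) :
    ∃ x ∈ stdSimplex ℝ X, ∀ b, c < ∑ a, x a * A a b := by
  classical
  set L : (Y → ℝ) → (X → ℝ) := fun y a => ∑ b, y b * A a b with hL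
  have hLlin : IsLinearMap ℝ L := by
    constructor
    · intro y y'; funext a; simp [L, add_mul, Finset.sum_add_distrib]
    · intro r y; funext a; simp [L, Finset.mul_sum, mul_assoc]
  set K : Set (X → ℝ) := L '' stdSimplex ℝ Y with hK
  set N : Set (X → ℝ) := {u | ∀ a, u a ≤ c} with hN
  have hKcomp : IsCompact K := by
    refine (isCompact_stdSimplex ℝ Y).image ?_
    exact continuous_pi fun a => continuous_finset_sum _ fun b _ =>
      (continuous_apply b).mul continuous_const
  have hKconv : Convex ℝ K := (convex_stdSimplex ℝ Y).is_linear_image hLlin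
  have hNconv : Convex ℝ N := by
    intro u hu v hv s t hs ht hst
    intro a
    have := hu a; have := hv a
    calc s * u a + t * v a ≤ s * c + t * c := by
          gcongr <;> assumption
      _ = c := by rw [← add_mul, hst, one_mul]
  have hNclosed : IsClosed N := by
    have : N = ⋂ a, {u : X → ℝ | u a ≤ c} := by ext u; simp [N, Set.mem_iInter]
    rw [this]
    exact isClosed_iInter fun a => isClosed_le (continuous_apply a) continuous_const
  have hdisj : Disjoint N K := by
    rw [Set.disjoint_left]
    rintro u hu ⟨y, hy, rfl⟩
    exact h ⟨y, hy, hu⟩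
  obtain ⟨φ, u, v, hNu, huv, hKv⟩ :=
    geometric_hahn_banach_closed_compact hNconv hNclosed hKconv hKcomp hdisj
  set x0 : X → ℝ := fun a => φ (Pi.single a 1) with hx0
  have hφ : ∀ w : X → ℝ, φ w = ∑ a, w a * x0 a := by
    intro w
    have hw : w = ∑ a, w a • (Pi.single a 1 : X → ℝ) := by
      funext j
      simp [Pi.single_apply]
    calc φ w = φ (∑ a, w a • (Pi.single a 1 : X → ℝ)) := by rw [← hw]
      _ = ∑ a, w a * x0 a := by
          rw [map_sum]
          simp [x0]
  have hcN : (fun _ : X => c) ∈ N := fun a => le_refl c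
  have hs0 : φ (fun _ => c) < u := hNu _ hcN
  have hx0nn : ∀ a, 0 ≤ x0 a := by
    intro a
    by_contra hneg
    push_neg at hneg
    set t : ℝ := (u - φ (fun _ => c)) / (-(x0 a)) with hT
    have ht : 0 ≤ t := div_nonneg (by linarith) (by linarith)
    have hwN : ((fun _ : X => c) + (-t) • (Pi.single a 1 : X → ℝ)) ∈ N := by
      intro j
      by_cases hj : j = a
      · subst hj
        simp only [Pi.add_apply, Pi.smul_apply, Pi.single_eq_same, smul_eq_mul, mul_one]
        nlinarith
      · simp [Pi.single_eq_of_ne hj]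
    have := hNu _ hwN
    rw [map_add, _root_.map_smul] at this
    have hφs : φ (Pi.single a (1:ℝ)) = x0 a := rfl
    rw [hφs] at this
    have : φ (fun _ => c) + t * (-(x0 a)) < u := by
      simpa [smul_eq_mul, mul_comm] using this
    rw [hT] at this
    rw [div_mul_cancel₀] at this
    · linarith
    · linarith
  set s : ℝ := ∑ a, x0 a with hsdef
  have hsnn : 0 ≤ s := Finset.sum_nonneg fun a _ => hx0nn a
  -- a pure strategy for Y, to show s > 0
  obtain ⟨b0⟩ := ‹Nonempty Y›
  have hpure : ∀ b : Y, (fun b' => if b' = b then (1:ℝ) else 0) ∈ stdSimplex ℝ Y := by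
    intro b
    constructor
    · intro b'; dsimp only; split <;> norm_num
    · simp
  have hLpure : ∀ b : Y, L (fun b' => if b' = b then (1:ℝ) else 0) = fun a => A a b := by
    intro b; funext a; simp [L, ite_mul]
  have hKb : ∀ b : Y, v < ∑ a, A a b * x0 a := by
    intro b
    have := hKv _ ⟨_, hpure b, rfl⟩
    rwa [hLpure b, hφ] at this
  have hcs : c * s < u := by
    have := hs0
    rw [hφ] at this
    calc c * s = ∑ a, c * x0 a := by rw [Finset.mul_sum]
      _ < u := this
  have hspos : 0 < s := by
    rcases lt_or_eq_of_le hsnn with h' | h'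
    · exact h'
    · exfalso
      have hx00 : ∀ a, x0 a = 0 := by
        intro a
        have := (Finset.sum_eq_zero_iff_of_nonneg (fun a _ => hx0nn a)).1 h'.symm
        exact this a (Finset.mem_univ a)
      have := hKb b0
      simp [hx00] at this
      have : c * s < u := hcs
      rw [← h'] at this
      simp at this
      linarith [hKb b0, huv]
  refine ⟨fun a => x0 a / s, ⟨fun a => div_nonneg (hx0nn a) hsnn, ?_⟩, ?_⟩
  · rw [← Finset.sum_div, ← hsdef, div_self (ne_of_gt hspos)]
  · intro b
    have h1 : c * s < v := lt_trans hcs huv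
    have h2 : v < ∑ a, A a b * x0 a := hKb b
    have : ∑ a, (x0 a / s) * A a b = (∑ a, A a b * x0 a) / s := by
      rw [Finset.sum_div]
      congr 1; funext a; ring
    rw [this]
    rw [lt_div_iff₀ hspos]
    nlinarith

end Minimax

section MVal

variable {X Y : Type} [Fintype X] [Nonempty X] [Fintype Y] [Nonempty Y]

lemma pure_mem_stdSimplex {Z : Type} [Fintype Z] [DecidableEq Z] (z : Z) :
    (fun z' => if z' = z then (1:ℝ) else 0) ∈ stdSimplex ℝ Z := by
  constructor
  · intro z'; dsimp only; split <;> norm_num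
  · simp

lemma weight_sum {x : X → ℝ} {y : Y → ℝ} (hx : x ∈ stdSimplex ℝ X)
    (hy : y ∈ stdSimplex ℝ Y) : ∑ z : X × Y, x z.1 * y z.2 = 1 := by
  rw [Fintype.sum_prod_type]
  have : ∀ a, ∑ b, x a * y b = x a := by
    intro a; rw [← Finset.mul_sum, hy.2, mul_one]
  rw [Finset.sum_congr rfl fun a _ => this a, hx.2]

lemma pay_ge (A : X → Y → ℝ) {x : X → ℝ} {y : Y → ℝ} (hx : x ∈ stdSimplex ℝ X)
    (hy : y ∈ stdSimplex ℝ Y) {c : ℝ} (hc : ∀ a b, c ≤ A a b) : c ≤ pay A x y := by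
  have h1 : ∑ z : X × Y, x z.1 * y z.2 * c ≤ pay A x y := by
    refine Finset.sum_le_sum fun z _ => ?_
    exact mul_le_mul_of_nonneg_left (hc z.1 z.2) (mul_nonneg (hx.1 z.1) (hy.1 z.2))
  calc c = (∑ z : X × Y, x z.1 * y z.2) * c := by rw [weight_sum hx hy, one_mul]
    _ = ∑ z : X × Y, x z.1 * y z.2 * c := by rw [Finset.sum_mul]
    _ ≤ pay A x y := h1

lemma pay_le (A : X → Y → ℝ) {x : X → ℝ} {y : Y → ℝ} (hx : x ∈ stdSimplex ℝ X)
    (hy : y ∈ stdSimplex ℝ Y) {c : ℝ} (hc : ∀ a b, A a b ≤ c) : pay A x y ≤ c := by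
  have h1 : pay A x y ≤ ∑ z : X × Y, x z.1 * y z.2 * c := by
    refine Finset.sum_le_sum fun z _ => ?_
    exact mul_le_mul_of_nonneg_left (hc z.1 z.2) (mul_nonneg (hx.1 z.1) (hy.1 z.2))
  calc pay A x y ≤ ∑ z : X × Y, x z.1 * y z.2 * c := h1
    _ = (∑ z : X × Y, x z.1 * y z.2) * c := by rw [Finset.sum_mul]
    _ = c := by rw [weight_sum hx hy, one_mul]

/-- the set of upper bounds achievable by y-strategies -/
def mvalSet (A : X → Y → ℝ) : Set ℝ :=
  {r | ∃ y ∈ stdSimplex ℝ Y, ∀ x ∈ stdSimplex ℝ X, pay A x y ≤ r}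

/-- the value of the matrix game -/
noncomputable def mval (A : X → Y → ℝ) : ℝ := sInf (mvalSet A)

lemma exists_lo (A : X → Y → ℝ) : ∃ lo : ℝ, ∀ a b, lo ≤ A a b := by
  obtain ⟨z0, hz0⟩ := Finite.exists_min (fun z : X × Y => A z.1 z.2)
  exact ⟨A z0.1 z0.2, fun a b => hz0 (a, b)⟩

lemma exists_hi (A : X → Y → ℝ) : ∃ hi : ℝ, ∀ a b, A a b ≤ hi := by
  obtain ⟨z0, hz0⟩ := Finite.exists_max (fun z : X × Y => A z.1 z.2)
  exact ⟨A z0.1 z0.2, fun a b => hz0 (a, b)⟩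

lemma mvalSet_nonempty (A : X → Y → ℝ) : (mvalSet A).Nonempty := by
  classical
  obtain ⟨hi, hhi⟩ := exists_hi A
  obtain ⟨b0⟩ := ‹Nonempty Y›
  exact ⟨hi, (fun b' => if b' = b0 then (1:ℝ) else 0), pure_mem_stdSimplex b0,
    fun x hx => pay_le A hx (pure_mem_stdSimplex b0) hhi⟩

lemma mvalSet_bddBelow (A : X → Y → ℝ) : BddBelow (mvalSet A) := by
  classical
  obtain ⟨lo, hlo⟩ := exists_lo A
  obtain ⟨a0⟩ := ‹Nonempty X›
  refine ⟨lo, fun r hr => ?_⟩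
  obtain ⟨y, hy, hry⟩ := hr
  exact le_trans (pay_ge A (pure_mem_stdSimplex a0) hy hlo) (hry _ (pure_mem_stdSimplex a0))

lemma mval_M2 (A : X → Y → ℝ) {δ : ℝ} (hδ : 0 < δ) :
    ∃ y ∈ stdSimplex ℝ Y, ∀ x ∈ stdSimplex ℝ X, pay A x y ≤ mval A + δ := by
  have h : sInf (mvalSet A) < mval A + δ := by
    rw [mval]; linarith
  obtain ⟨r, hr, hrlt⟩ := (csInf_lt_iff (mvalSet_bddBelow A) (mvalSet_nonempty A)).1 h
  obtain ⟨y, hy, hry⟩ := hr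
  exact ⟨y, hy, fun x hx => le_trans (hry x hx) (le_of_lt hrlt)⟩

lemma mval_M1 (A : X → Y → ℝ) {δ : ℝ} (hδ : 0 < δ) :
    ∃ x ∈ stdSimplex ℝ X, ∀ y ∈ stdSimplex ℝ Y, mval A - δ ≤ pay A x y := by
  set c : ℝ := mval A - δ / 2 with hc
  have halt : ¬ ∃ y ∈ stdSimplex ℝ Y, ∀ a, (∑ b, y b * A a b) ≤ c := by
    rintro ⟨y, hy, hya⟩
    have hcS : c ∈ mvalSet A := by
      refine ⟨y, hy, fun x hx => ?_⟩
      rw [pay_eq]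
      have : ∀ a, ∑ b, x a * y b * A a b ≤ x a * c := by
        intro a
        have : ∑ b, x a * y b * A a b = x a * ∑ b, y b * A a b := by
          rw [Finset.mul_sum]; congr 1; funext b; ring
        rw [this]
        exact mul_le_mul_of_nonneg_left (hya a) (hx.1 a)
      calc ∑ a, ∑ b, x a * y b * A a b ≤ ∑ a, x a * c := Finset.sum_le_sum fun a _ => this a
        _ = (∑ a, x a) * c := by rw [Finset.sum_mul]
        _ = c := by rw [hx.2, one_mul]
    have : mval A ≤ c := csInf_le (mvalSet_bddBelow A) hcS
    rw [hc] at this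
    linarith
  obtain ⟨x, hx, hxb⟩ := alt A c halt
  refine ⟨x, hx, fun y hy => ?_⟩
  have hpay : pay A x y = ∑ b, y b * ∑ a, x a * A a b := by
    rw [pay_eq, Finset.sum_comm]
    congr 1; funext b
    rw [Finset.mul_sum]; congr 1; funext a; ring
  have : ∑ b, y b * c ≤ ∑ b, y b * ∑ a, x a * A a b := by
    refine Finset.sum_le_sum fun b _ => ?_
    exact mul_le_mul_of_nonneg_left (le_of_lt (hxb b)) (hy.1 b)
  have hyc : ∑ b, y b * c = c := by rw [← Finset.sum_mul, hy.2, one_mul]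
  rw [hpay]
  rw [hyc] at this
  calc mval A - δ ≤ c := by rw [hc]; linarith
    _ ≤ _ := this
end MVal

section PMFConv

variable {Z : Type} [Fintype Z]

noncomputable def toSimp (p : PMF Z) : Z → ℝ := fun z => (p z).toReal

lemma toSimp_mem (p : PMF Z) : toSimp p ∈ stdSimplex ℝ Z := by
  constructor
  · intro z; exact ENNReal.toReal_nonneg
  · have h := p.tsum_coe
    rw [tsum_fintype] at h
    have : ∑ z, toSimp p z = (∑ z, p z).toReal :=
      (ENNReal.toReal_sum fun z _ => p.apply_ne_top z).symm
    rw [this, h, ENNReal.toReal_one]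

noncomputable def ofSimp (x : Z → ℝ) (hx : x ∈ stdSimplex ℝ Z) : PMF Z :=
  PMF.ofFintype (fun z => ENNReal.ofReal (x z)) (by
    rw [← ENNReal.ofReal_sum_of_nonneg fun z _ => hx.1 z, hx.2, ENNReal.ofReal_one])

lemma ofSimp_toReal (x : Z → ℝ) (hx : x ∈ stdSimplex ℝ Z) (z : Z) :
    ((ofSimp x hx) z).toReal = x z := by
  simp only [ofSimp, PMF.ofFintype_apply]
  exact ENNReal.toReal_ofReal (hx.1 z)

lemma pmf_sum_one (p : PMF Z) : ∑ z, p z = 1 := by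
  have h := p.tsum_coe; rwa [tsum_fintype] at h

end PMFConv

section Game

variable {X Y : Type} [Fintype X] [Nonempty X] [Fintype Y] [Nonempty Y]

/-- expected payoff of the k-round game starting at history h -/
noncomputable def EV : ℕ → (List (X × Y) → ℝ) → Strategy (X × Y) X →
    Strategy (X × Y) Y → List (X × Y) → ℝ
  | 0, g, _, _, h => g h
  | (k+1), g, σ, τ, h =>
      ∑ z : X × Y, (σ h z.1).toReal * (τ h z.2).toReal * EV k g σ τ (h ++ [z])

/-- game value by backward induction -/
noncomputable def gval : ℕ → (List (X × Y) → ℝ) → List (X × Y) → ℝ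
  | 0, g, h => g h
  | (k+1), g, h => mval (fun a b => gval k g (h ++ [(a, b)]))

lemma EV_eq_pay (k : ℕ) (g : List (X × Y) → ℝ) (σ : Strategy (X × Y) X)
    (τ : Strategy (X × Y) Y) (h : List (X × Y)) :
    EV (k+1) g σ τ h =
      pay (fun a b => EV k g σ τ (h ++ [(a, b)])) (toSimp (σ h)) (toSimp (τ h)) := by
  rfl

lemma EV_congr_left (k : ℕ) (g : List (X × Y) → ℝ) {σ σ' : Strategy (X × Y) X}
    (τ : Strategy (X × Y) Y) (h : List (X × Y))
    (hc : ∀ h' : List (X × Y), h.length ≤ h'.length → σ h' = σ' h') :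
    EV k g σ τ h = EV k g σ' τ h := by
  induction k generalizing h with
  | zero => rfl
  | succ k ih =>
    show (∑ z : X × Y, _) = _
    refine Finset.sum_congr rfl fun z _ => ?_
    rw [hc h (le_refl _), ih (h ++ [z]) fun h' hh' => hc h' (by simp at hh'; omega)]

lemma EV_congr_right (k : ℕ) (g : List (X × Y) → ℝ) (σ : Strategy (X × Y) X)
    {τ τ' : Strategy (X × Y) Y} (h : List (X × Y))
    (hc : ∀ h' : List (X × Y), h.length ≤ h'.length → τ h' = τ' h') :
    EV k g σ τ h = EV k g σ τ' h := by
  induction k generalizing h with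
  | zero => rfl
  | succ k ih =>
    show (∑ z : X × Y, _) = _
    refine Finset.sum_congr rfl fun z _ => ?_
    rw [hc h (le_refl _), ih (h ++ [z]) fun h' hh' => hc h' (by simp at hh'; omega)]

lemma EV_lower (k : ℕ) (g : List (X × Y) → ℝ) {δ : ℝ} (hδ : 0 < δ) (m : ℕ) :
    ∃ σ : Strategy (X × Y) X, ∀ (τ : Strategy (X × Y) Y) (h : List (X × Y)),
      h.length = m → gval k g h - δ ≤ EV k g σ τ h := by
  classical
  induction k generalizing m δ with
  | zero =>
    refine ⟨fun _ => PMF.pure (Classical.arbitrary X), fun τ h _ => ?_⟩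
    show gval 0 g h - δ ≤ g h
    simp [gval]; linarith
  | succ k ih =>
    obtain ⟨σ₀, hσ₀⟩ := ih (half_pos hδ) (m + 1)
    set A : List (X × Y) → X → Y → ℝ := fun h a b => gval k g (h ++ [(a, b)]) with hA
    have hx : ∀ h : List (X × Y), ∃ x ∈ stdSimplex ℝ X,
        ∀ y ∈ stdSimplex ℝ Y, mval (A h) - δ/2 ≤ pay (A h) x y :=
      fun h => mval_M1 (A h) (half_pos hδ)
    choose xs hxsmem hxs using hx
    set σ : Strategy (X × Y) X := fun h' =>
      if h'.length = m then ofSimp (xs h') (hxsmem h') else σ₀ h' with hσ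
    refine ⟨σ, fun τ h hm => ?_⟩
    have hσh : σ h = ofSimp (xs h) (hxsmem h) := by rw [hσ]; simp [hm]
    have hcont : ∀ z : X × Y, EV k g σ τ (h ++ [z]) = EV k g σ₀ τ (h ++ [z]) := by
      intro z
      refine EV_congr_left k g τ (h ++ [z]) fun h' hh' => ?_
      rw [hσ]
      have : h'.length ≠ m := by simp at hh'; omega
      simp [this]
    have hEV : EV (k+1) g σ τ h =
        ∑ z : X × Y, (xs h z.1) * (τ h z.2).toReal * EV k g σ₀ τ (h ++ [z]) := by
      show (∑ z : X × Y, (σ h z.1).toReal * (τ h z.2).toReal * EV k g σ τ (h ++ [z])) = _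
      refine Finset.sum_congr rfl fun z _ => ?_
      rw [hσh, ofSimp_toReal, hcont z]
    have hterm : ∀ z : X × Y,
        (xs h z.1) * (τ h z.2).toReal * (A h z.1 z.2 - δ/2) ≤
        (xs h z.1) * (τ h z.2).toReal * EV k g σ₀ τ (h ++ [z]) := by
      intro z
      have h1 : gval k g (h ++ [z]) - δ/2 ≤ EV k g σ₀ τ (h ++ [z]) := by
        refine hσ₀ τ (h ++ [z]) ?_
        simp [hm]
      have h2 : A h z.1 z.2 - δ/2 ≤ EV k g σ₀ τ (h ++ [z]) := by
        rw [hA]; simpa using h1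
      exact mul_le_mul_of_nonneg_left h2
        (mul_nonneg ((hxsmem h).1 z.1) ENNReal.toReal_nonneg)
    have hsum : ∑ z : X × Y, (xs h z.1) * (τ h z.2).toReal * (A h z.1 z.2 - δ/2)
        = pay (A h) (xs h) (toSimp (τ h)) - δ/2 := by
      have hw : ∑ z : X × Y, (xs h z.1) * (toSimp (τ h) z.2) = 1 :=
        weight_sum (hxsmem h) (toSimp_mem (τ h))
      have : ∀ z : X × Y, (xs h z.1) * (τ h z.2).toReal * (A h z.1 z.2 - δ/2) =
          (xs h z.1) * (toSimp (τ h) z.2) * A h z.1 z.2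
          - (xs h z.1) * (toSimp (τ h) z.2) * (δ/2) := by
        intro z; simp only [toSimp]; ring
      rw [Finset.sum_congr rfl fun z _ => this z, Finset.sum_sub_distrib, ← Finset.sum_mul, hw,
        one_mul, pay]
    have hpay : mval (A h) - δ/2 ≤ pay (A h) (xs h) (toSimp (τ h)) :=
      hxs h (toSimp (τ h)) (toSimp_mem (τ h))
    have hgv : gval (k+1) g h = mval (A h) := rfl
    rw [hEV, hgv]
    calc mval (A h) - δ = (mval (A h) - δ/2) - δ/2 := by ring
      _ ≤ pay (A h) (xs h) (toSimp (τ h)) - δ/2 := by linarith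
      _ = ∑ z : X × Y, (xs h z.1) * (τ h z.2).toReal * (A h z.1 z.2 - δ/2) := hsum.symm
      _ ≤ _ := Finset.sum_le_sum fun z _ => hterm z

lemma EV_upper (k : ℕ) (g : List (X × Y) → ℝ) {δ : ℝ} (hδ : 0 < δ) (m : ℕ) :
    ∃ τ : Strategy (X × Y) Y, ∀ (σ : Strategy (X × Y) X) (h : List (X × Y)),
      h.length = m → EV k g σ τ h ≤ gval k g h + δ := by
  classical
  induction k generalizing m δ with
  | zero =>
    refine ⟨fun _ => PMF.pure (Classical.arbitrary Y), fun σ h _ => ?_⟩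
    show g h ≤ gval 0 g h + δ
    simp [gval]; linarith
  | succ k ih =>
    obtain ⟨τ₀, hτ₀⟩ := ih (half_pos hδ) (m + 1)
    set A : List (X × Y) → X → Y → ℝ := fun h a b => gval k g (h ++ [(a, b)]) with hA
    have hy : ∀ h : List (X × Y), ∃ y ∈ stdSimplex ℝ Y,
        ∀ x ∈ stdSimplex ℝ X, pay (A h) x y ≤ mval (A h) + δ/2 :=
      fun h => mval_M2 (A h) (half_pos hδ)
    choose ys hysmem hys using hy
    set τ : Strategy (X × Y) Y := fun h' =>
      if h'.length = m then ofSimp (ys h') (hysmem h') else τ₀ h' with hτ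
    refine ⟨τ, fun σ h hm => ?_⟩
    have hτh : τ h = ofSimp (ys h) (hysmem h) := by rw [hτ]; simp [hm]
    have hcont : ∀ z : X × Y, EV k g σ τ (h ++ [z]) = EV k g σ τ₀ (h ++ [z]) := by
      intro z
      refine EV_congr_right k g σ (h ++ [z]) fun h' hh' => ?_
      rw [hτ]
      have : h'.length ≠ m := by simp at hh'; omega
      simp [this]
    have hEV : EV (k+1) g σ τ h =
        ∑ z : X × Y, (σ h z.1).toReal * (ys h z.2) * EV k g σ τ₀ (h ++ [z]) := by
      show (∑ z : X × Y, (σ h z.1).toReal * (τ h z.2).toReal * EV k g σ τ (h ++ [z])) = _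
      refine Finset.sum_congr rfl fun z _ => ?_
      rw [hτh, ofSimp_toReal, hcont z]
    have hterm : ∀ z : X × Y,
        (σ h z.1).toReal * (ys h z.2) * EV k g σ τ₀ (h ++ [z]) ≤
        (σ h z.1).toReal * (ys h z.2) * (A h z.1 z.2 + δ/2) := by
      intro z
      have h1 : EV k g σ τ₀ (h ++ [z]) ≤ gval k g (h ++ [z]) + δ/2 := by
        refine hτ₀ σ (h ++ [z]) ?_
        simp [hm]
      have h2 : EV k g σ τ₀ (h ++ [z]) ≤ A h z.1 z.2 + δ/2 := by
        rw [hA]; simpa using h1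
      exact mul_le_mul_of_nonneg_left h2
        (mul_nonneg ENNReal.toReal_nonneg ((hysmem h).1 z.2))
    have hsum : ∑ z : X × Y, (σ h z.1).toReal * (ys h z.2) * (A h z.1 z.2 + δ/2)
        = pay (A h) (toSimp (σ h)) (ys h) + δ/2 := by
      have hw : ∑ z : X × Y, (toSimp (σ h) z.1) * (ys h z.2) = 1 :=
        weight_sum (toSimp_mem (σ h)) (hysmem h)
      have : ∀ z : X × Y, (σ h z.1).toReal * (ys h z.2) * (A h z.1 z.2 + δ/2) =
          (toSimp (σ h) z.1) * (ys h z.2) * A h z.1 z.2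
          + (toSimp (σ h) z.1) * (ys h z.2) * (δ/2) := by
        intro z; simp only [toSimp]; ring
      rw [Finset.sum_congr rfl fun z _ => this z, Finset.sum_add_distrib, ← Finset.sum_mul, hw,
        one_mul, pay]
    have hpay : pay (A h) (toSimp (σ h)) (ys h) ≤ mval (A h) + δ/2 :=
      hys h (toSimp (σ h)) (toSimp_mem (σ h))
    have hgv : gval (k+1) g h = mval (A h) := rfl
    rw [hEV, hgv]
    calc ∑ z : X × Y, (σ h z.1).toReal * (ys h z.2) * EV k g σ τ₀ (h ++ [z])
        ≤ ∑ z : X × Y, (σ h z.1).toReal * (ys h z.2) * (A h z.1 z.2 + δ/2) :=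
          Finset.sum_le_sum fun z _ => hterm z
      _ = pay (A h) (toSimp (σ h)) (ys h) + δ/2 := hsum
      _ ≤ (mval (A h) + δ/2) + δ/2 := by linarith
      _ = mval (A h) + δ := by ring

end Game

section Lists

variable {Z : Type} [Fintype Z] [Nonempty Z]

/-- appending a single element, as an embedding -/
def appendEmb (Z : Type) : List Z × Z ↪ List Z where
  toFun := fun q => q.1 ++ [q.2]
  inj' := by
    rintro ⟨q, z⟩ ⟨q', z'⟩ h
    simp only at h
    have h1 : q = q' := by
      have := congrArg List.dropLast h
      simpa [List.dropLast_concat] using this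
    have h2 : z = z' := by
      have := congrArg (fun l : List Z => l.getLast?) h
      simpa [List.getLast?_concat] using this
    simp [h1, h2]

/-- all lists of a given length -/
def allLists : ℕ → Finset (List Z)
  | 0 => {[]}
  | (n+1) => ((allLists n) ×ˢ (Finset.univ : Finset Z)).map (appendEmb Z)

lemma mem_allLists (n : ℕ) (p : List Z) : p ∈ allLists n ↔ p.length = n := by
  induction n generalizing p with
  | zero => simp [allLists, List.length_eq_zero_iff]
  | succ n ih =>
    constructor
    · intro hp
      simp only [allLists, Finset.mem_map] at hp
      obtain ⟨q, hq, rfl⟩ := hp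
      simp only [Finset.mem_product] at hq
      show (q.1 ++ [q.2]).length = n + 1
      simp [appendEmb, ih q.1 |>.1 hq.1]
    · intro hp
      have hne : p ≠ [] := by intro h; rw [h] at hp; simp at hp
      have hdl : p.dropLast ++ [p.getLast hne] = p := List.dropLast_append_getLast hne
      simp only [allLists, Finset.mem_map]
      refine ⟨(p.dropLast, p.getLast hne), ?_, hdl⟩
      simp only [Finset.mem_product, Finset.mem_univ, and_true]
      rw [ih]
      rw [List.length_dropLast, hp]
      omega

lemma sum_allLists_succ {M : Type} [AddCommMonoid M] (n : ℕ) (F : List Z → M) :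
    ∑ p ∈ allLists (Z := Z) (n+1), F p = ∑ p ∈ allLists (Z := Z) n, ∑ z : Z, F (p ++ [z]) := by
  rw [allLists, Finset.sum_map, Finset.sum_product]
  rfl

end Lists

section CylProb

variable {X Y : Type} [Fintype X] [Nonempty X] [Fintype Y] [Nonempty Y]

lemma cylProb_nil (σ : Strategy (X × Y) X) (τ : Strategy (X × Y) Y) :
    cylProb σ τ [] = 1 := by
  simp [cylProb]

lemma cylProb_eq_range (σ : Strategy (X × Y) X) (τ : Strategy (X × Y) Y)
    (l : List (X × Y)) :
    cylProb σ τ l = ∏ i ∈ Finset.range l.length,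
      (σ (l.take i) ((l.getD i (Classical.arbitrary _)).1)
        * τ (l.take i) ((l.getD i (Classical.arbitrary _)).2)) := by
  rw [cylProb, ← Fin.prod_univ_eq_prod_range]
  refine Finset.prod_congr rfl fun i _ => ?_
  rw [List.getD_eq_getElem l _ i.2]
  congr 1 <;> rw [List.get_eq_getElem]

lemma cylProb_append (σ : Strategy (X × Y) X) (τ : Strategy (X × Y) Y)
    (p : List (X × Y)) (z : X × Y) :
    cylProb σ τ (p ++ [z]) = cylProb σ τ p * (σ p z.1 * τ p z.2) := by
  rw [cylProb_eq_range, cylProb_eq_range]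
  have hlen : (p ++ [z]).length = p.length + 1 := by simp
  rw [hlen, Finset.prod_range_succ]
  congr 1
  · refine Finset.prod_congr rfl fun i hi => ?_
    rw [Finset.mem_range] at hi
    rw [List.take_append_of_le_length (le_of_lt hi),
      List.getD_append _ _ _ _ (by omega)]
  · rw [List.take_left, List.getD_append_right _ _ _ _ (le_refl _)]
    simp

lemma cylProb_ne_top (σ : Strategy (X × Y) X) (τ : Strategy (X × Y) Y)
    (p : List (X × Y)) : cylProb σ τ p ≠ ⊤ := by
  rw [cylProb]
  exact ENNReal.prod_ne_top fun i _ =>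
    ENNReal.mul_ne_top (PMF.apply_ne_top _ _) (PMF.apply_ne_top _ _)

lemma sum_z_pmf (σ : Strategy (X × Y) X) (τ : Strategy (X × Y) Y) (p : List (X × Y)) :
    ∑ z : X × Y, σ p z.1 * τ p z.2 = 1 := by
  rw [Fintype.sum_prod_type]
  have : ∀ a, ∑ b, σ p a * τ p b = σ p a := by
    intro a; rw [← Finset.mul_sum, pmf_sum_one, mul_one]
  rw [Finset.sum_congr rfl fun a _ => this a, pmf_sum_one]

lemma sum_cylProb (σ : Strategy (X × Y) X)
    (τ : Strategy (X × Y) Y) (n : ℕ) :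
    ∑ p ∈ allLists (Z := X × Y) n, cylProb σ τ p = 1 := by
  induction n with
  | zero => simp [allLists, cylProb_nil]
  | succ n ih =>
    rw [sum_allLists_succ]
    have : ∀ p ∈ allLists (Z := X × Y) n, ∑ z : X × Y, cylProb σ τ (p ++ [z])
        = cylProb σ τ p := by
      intro p _
      have : ∀ z : X × Y, cylProb σ τ (p ++ [z]) = cylProb σ τ p * (σ p z.1 * τ p z.2) :=
        fun z => cylProb_append σ τ p z
      rw [Finset.sum_congr rfl fun z _ => this z, ← Finset.mul_sum, sum_z_pmf, mul_one]
    rw [Finset.sum_congr rfl this, ih]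

lemma EV_succ_last (k : ℕ) (g : List (X × Y) → ℝ) (σ : Strategy (X × Y) X)
    (τ : Strategy (X × Y) Y) (h : List (X × Y)) :
    EV (k+1) g σ τ h =
      EV k (fun h' => ∑ z : X × Y, (σ h' z.1).toReal * (τ h' z.2).toReal * g (h' ++ [z]))
        σ τ h := by
  induction k generalizing h with
  | zero => rfl
  | succ k ih =>
    show (∑ z : X × Y, (σ h z.1).toReal * (τ h z.2).toReal * EV (k+1) g σ τ (h ++ [z])) = _
    refine Finset.sum_congr rfl fun z _ => ?_
    rw [ih (h ++ [z])]

lemma sum_cylProb_mul (σ : Strategy (X × Y) X)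
    (τ : Strategy (X × Y) Y) (n : ℕ) (g : List (X × Y) → ℝ) :
    ∑ p ∈ allLists (Z := X × Y) n, (cylProb σ τ p).toReal * g p = EV n g σ τ [] := by
  induction n generalizing g with
  | zero => simp [allLists, cylProb_nil, EV]
  | succ n ih =>
    rw [sum_allLists_succ]
    have hterm : ∀ p ∈ allLists (Z := X × Y) n,
        ∑ z : X × Y, (cylProb σ τ (p ++ [z])).toReal * g (p ++ [z])
        = (cylProb σ τ p).toReal *
          ∑ z : X × Y, (σ p z.1).toReal * (τ p z.2).toReal * g (p ++ [z]) := by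
      intro p _
      rw [Finset.mul_sum]
      refine Finset.sum_congr rfl fun z _ => ?_
      rw [cylProb_append, ENNReal.toReal_mul, ENNReal.toReal_mul]
      ring
    rw [Finset.sum_congr rfl hterm,
      ih (fun h' => ∑ z : X × Y, (σ h' z.1).toReal * (τ h' z.2).toReal * g (h' ++ [z])),
      EV_succ_last]

end CylProb

section Hist

variable {Z : Type}

/-- the first `n` moves of a play, as a list -/
def hist (n : ℕ) (w : Play Z) : List Z := List.ofFn fun i : Fin n => w i

@[simp] lemma hist_length (n : ℕ) (w : Play Z) : (hist n w).length = n :=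
  List.length_ofFn

lemma mem_cyl_hist (n : ℕ) (w : Play Z) : w ∈ cyl (hist n w) := by
  intro i
  show w i.1 = (hist n w)[i.1]
  simp [hist]

lemma eq_hist_of_mem_cyl {n : ℕ} {w : Play Z} {p : List Z} (hw : w ∈ cyl p)
    (hp : p.length = n) : p = hist n w := by
  refine List.ext_get (by simp [hp]) fun i h1 h2 => ?_
  have := hw ⟨i, h1⟩
  rw [← this]
  simp [hist, List.get_ofFn]

lemma hist_getD (n : ℕ) (w : Play Z) (i : ℕ) (hi : i < n) (d : Z) :
    (hist n w).getD i d = w i := by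
  rw [List.getD_eq_getElem _ _ (by simpa using hi)]
  simp [hist]

end Hist

section MeasureSide

variable {X Y : Type} [Fintype X] [Nonempty X] [Fintype Y] [Nonempty Y]
  [MeasurableSpace X] [MeasurableSpace Y]
  {σ : Strategy (X × Y) X} {τ : Strategy (X × Y) Y}
  {μ : Measure (Play (X × Y))}

/-- measure + complement add to 1 implies null measurability -/
lemma nullMeasurable_of_add_compl [IsProbabilityMeasure μ] {A : Set (Play (X × Y))}
    (h : μ A + μ Aᶜ = 1) : NullMeasurableSet A μ := by
  set B := toMeasurable μ A with hB
  set C := toMeasurable μ Aᶜ with hC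
  have hBC : B ∪ C = Set.univ := by
    apply Set.eq_univ_of_univ_subset
    rw [← Set.union_compl_self A]
    exact Set.union_subset_union (subset_toMeasurable μ A) (subset_toMeasurable μ Aᶜ)
  have hsum : μ B + μ C = 1 + μ (B ∩ C) := by
    rw [← measure_union_add_inter B (measurableSet_toMeasurable μ Aᶜ), hBC, measure_univ]
  rw [hB, hC, measure_toMeasurable, measure_toMeasurable, h] at hsum
  have h0 : μ (B ∩ C) = 0 := by
    have := hsum
    nth_rewrite 1 [← add_zero (1 : ENNReal)] at this
    exact (ENNReal.add_right_inj ENNReal.one_ne_top).1 this |>.symm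
  have hdiff : μ (B \ A) = 0 := by
    refine measure_mono_null ?_ h0
    intro w hw
    exact ⟨hw.1, subset_toMeasurable μ Aᶜ hw.2⟩
  have haeq : A =ᵐ[μ] B := by
    rw [ae_eq_set]
    constructor
    · rw [Set.diff_eq_empty.2 (subset_toMeasurable μ A)]; exact measure_empty
    · exact hdiff
  exact ((measurableSet_toMeasurable μ A).nullMeasurableSet).congr haeq.symm

lemma cyl_nullMeasurable (hμ : IsInduced σ τ μ) (p : List (X × Y)) :
    NullMeasurableSet (cyl p) μ := by
  classical
  haveI := hμ.1
  set n := p.length with hn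
  have hpmem : p ∈ allLists (Z := X × Y) n := (mem_allLists n p).2 rfl
  have hsub : (cyl p)ᶜ ⊆ ⋃ q ∈ (allLists (Z := X × Y) n).erase p, cyl q := by
    intro w hw
    have hmem : w ∈ cyl (hist n w) := mem_cyl_hist n w
    have hne : hist n w ≠ p := by
      intro he
      exact hw (he ▸ hmem)
    refine Set.mem_biUnion ?_ hmem
    exact Finset.mem_erase.2 ⟨hne, (mem_allLists n _).2 (hist_length n w)⟩
  have hle : μ (cyl p)ᶜ ≤ ∑ q ∈ (allLists (Z := X × Y) n).erase p, cylProb σ τ q := by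
    refine le_trans (measure_mono hsub) ?_
    refine le_trans (measure_biUnion_finset_le _ _) ?_
    exact le_of_eq (Finset.sum_congr rfl fun q _ => hμ.2 q)
  have hsplit : cylProb σ τ p + ∑ q ∈ (allLists (Z := X × Y) n).erase p, cylProb σ τ q
      = 1 := by
    rw [Finset.add_sum_erase _ _ hpmem, sum_cylProb]
  have hone : (1 : ENNReal) ≤ μ (cyl p) + μ (cyl p)ᶜ := by
    rw [← measure_univ (μ := μ), ← Set.union_compl_self (cyl p)]
    exact measure_union_le _ _
  have hother : μ (cyl p) + μ (cyl p)ᶜ ≤ 1 := by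
    rw [hμ.2 p]
    calc cylProb σ τ p + μ (cyl p)ᶜ
        ≤ cylProb σ τ p + ∑ q ∈ (allLists (Z := X × Y) n).erase p, cylProb σ τ q :=
          add_le_add le_rfl hle
      _ = 1 := hsplit
  exact nullMeasurable_of_add_compl (le_antisymm hother hone)

lemma exists_phi (hμ : IsInduced σ τ μ) (n : ℕ) (g : List (X × Y) → ℝ) :
    ∃ φ : Play (X × Y) → ℝ, Measurable φ ∧ Integrable φ μ ∧
      (∀ᵐ w ∂μ, φ w = g (hist n w)) ∧
      ∫ w, φ w ∂μ = ∑ p ∈ allLists (Z := X × Y) n, (cylProb σ τ p).toReal * g p := by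
  classical
  haveI := hμ.1
  have hNM : ∀ p ∈ allLists (Z := X × Y) n, NullMeasurableSet (cyl p) μ :=
    fun p _ => cyl_nullMeasurable hμ p
  choose B hBsup hBmeas hBae using fun p (hp : p ∈ allLists (Z := X × Y) n) =>
    (hNM p hp).exists_measurable_superset_ae_eq
  set φ : Play (X × Y) → ℝ := fun w =>
    ∑ p ∈ (allLists (Z := X × Y) n).attach,
      Set.indicator (B p.1 p.2) (fun _ => g p.1) w with hφ
  have hmeas : Measurable φ := by
    refine Finset.measurable_sum _ fun p _ => ?_
    exact (measurable_const).indicator (hBmeas p.1 p.2)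
  have hint : Integrable φ μ := by
    refine integrable_finset_sum _ fun p _ => ?_
    exact (integrable_const (g p.1)).indicator (hBmeas p.1 p.2)
  have hae : ∀ᵐ w ∂μ, φ w = g (hist n w) := by
    have hiff : ∀ᵐ w ∂μ, ∀ p : {x // x ∈ allLists (Z := X × Y) n},
        (w ∈ B p.1 p.2 ↔ w ∈ cyl p.1) := by
      rw [ae_all_iff]
      intro p
      have := hBae p.1 p.2
      rw [Filter.eventuallyEq_set] at this
      exact this
    filter_upwards [hiff] with w hw
    show (∑ p ∈ (allLists (Z := X × Y) n).attach,
      Set.indicator (B p.1 p.2) (fun _ => g p.1) w) = g (hist n w)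
    have hwc : w ∈ cyl (hist n w) := mem_cyl_hist n w
    have hhist : hist n w ∈ allLists (Z := X × Y) n := (mem_allLists n _).2 (hist_length n w)
    rw [Finset.sum_eq_single (⟨hist n w, hhist⟩ : {x // x ∈ allLists (Z := X × Y) n})]
    · rw [Set.indicator_of_mem ((hw ⟨_, hhist⟩).2 hwc)]
    · rintro ⟨q, hq⟩ _ hne
      refine Set.indicator_of_notMem ?_ _
      intro hwB
      have hwq : w ∈ cyl q := (hw ⟨q, hq⟩).1 hwB
      have : q = hist n w := eq_hist_of_mem_cyl hwq ((mem_allLists n q).1 hq)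
      exact hne (by simp [this])
    · intro h; exact absurd (Finset.mem_attach _ _) h
  refine ⟨φ, hmeas, hint, hae, ?_⟩
  rw [hφ, integral_finset_sum _ fun p _ => (integrable_const (g p.1)).indicator (hBmeas p.1 p.2)]
  rw [← Finset.sum_attach (allLists (Z := X × Y) n)
    (fun p => (cylProb σ τ p).toReal * g p)]
  refine Finset.sum_congr rfl fun p _ => ?_
  rw [integral_indicator_const _ (hBmeas p.1 p.2)]
  have : μ (B p.1 p.2) = cylProb σ τ p.1 := by
    rw [measure_congr (hBae p.1 p.2), hμ.2]
  rw [measureReal_def, this, smul_eq_mul]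

end MeasureSide

section UnifCont

variable {X Y : Type} [Fintype X] [Nonempty X] [Fintype Y] [Nonempty Y]
  [TopologicalSpace X] [DiscreteTopology X] [TopologicalSpace Y] [DiscreteTopology Y]

lemma unif_cont (f : Play (X × Y) → ℝ) (hf : Continuous f) {ε : ℝ} (hε : 0 < ε) :
    ∃ n : ℕ, ∀ w w' : Play (X × Y), (∀ i, i < n → w i = w' i) → |f w - f w'| ≤ ε := by
  set C : ℕ → Set (Play (X × Y) × Play (X × Y)) := fun n =>
    {q | (∀ i, i < n → q.1 i = q.2 i) ∧ ε ≤ |f q.1 - f q.2|} with hC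
  have hclosed : ∀ n, IsClosed (C n) := by
    intro n
    have h1 : IsClosed {q : Play (X × Y) × Play (X × Y) | ∀ i, i < n → q.1 i = q.2 i} := by
      have : {q : Play (X × Y) × Play (X × Y) | ∀ i, i < n → q.1 i = q.2 i}
          = ⋂ (i : ℕ) (_ : i < n), {q | q.1 i = q.2 i} := by
        ext q; simp [Set.mem_iInter]
      rw [this]
      refine isClosed_iInter fun i => isClosed_iInter fun _ => ?_
      exact isClosed_eq ((continuous_apply i).comp continuous_fst)
        ((continuous_apply i).comp continuous_snd)
    have h2 : IsClosed {q : Play (X × Y) × Play (X × Y) | ε ≤ |f q.1 - f q.2|} :=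
      isClosed_le continuous_const (((hf.comp continuous_fst).sub (hf.comp continuous_snd)).abs)
    exact h1.inter h2
  have hempty : (Set.univ : Set (Play (X × Y) × Play (X × Y))) ∩ ⋂ n, C n = ∅ := by
    ext q
    simp only [Set.mem_inter_iff, Set.mem_iInter, Set.mem_empty_iff_false, iff_false,
      Set.mem_univ, true_and, not_forall]
    by_contra hq
    push_neg at hq
    have heq : q.1 = q.2 := by
      funext i
      exact (hq (i + 1)).1 i (by omega)
    have := (hq 0).2
    rw [heq] at this
    simp at this
    linarith
  obtain ⟨u, hu⟩ := isCompact_univ.elim_finite_subfamily_closed C hclosed hempty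
  refine ⟨u.sup id, fun w w' hww' => ?_⟩
  by_contra hcon
  push_neg at hcon
  have hmem : (w, w') ∈ ⋂ n ∈ u, C n := by
    refine Set.mem_iInter₂.2 fun n hn => ?_
    refine ⟨fun i hi => hww' i (lt_of_lt_of_le hi (Finset.le_sup (f := id) hn)), ?_⟩
    exact le_of_lt hcon
  have : (w, w') ∈ (Set.univ : Set _) ∩ ⋂ n ∈ u, C n := ⟨Set.mem_univ _, hmem⟩
  rw [hu] at this
  exact this

end UnifCont

section Final

variable {X Y : Type} [Fintype X] [Nonempty X] [Fintype Y] [Nonempty Y]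
  [MeasurableSpace X] [MeasurableSpace Y]
  [TopologicalSpace X] [DiscreteTopology X] [TopologicalSpace Y] [DiscreteTopology Y]

lemma f_bound (f : Play (X × Y) → ℝ) (hf : Continuous f) :
    ∃ M : ℝ, 0 ≤ M ∧ ∀ w, |f w| ≤ M := by
  obtain ⟨w₀, -, hmax⟩ := isCompact_univ.exists_isMaxOn Set.univ_nonempty
    ((hf.abs).continuousOn (s := Set.univ))
  exact ⟨|f w₀|, abs_nonneg _, fun w => hmax (Set.mem_univ w)⟩

lemma f_approx (f : Play (X × Y) → ℝ) (hf : Continuous f) {ε : ℝ} (hε : 0 < ε) :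
    ∃ n : ℕ, ∃ g : List (X × Y) → ℝ, ∀ w, |f w - g (hist n w)| ≤ ε := by
  obtain ⟨n, hn⟩ := unif_cont f hf hε
  refine ⟨n, fun p => f (fun i => p.getD i (Classical.arbitrary _)), fun w => ?_⟩
  refine hn w (fun i => (hist n w).getD i (Classical.arbitrary _)) fun i hi => ?_
  exact (hist_getD n w i hi _).symm

lemma f_integrable {σ : Strategy (X × Y) X} {τ : Strategy (X × Y) Y}
    {μ : Measure (Play (X × Y))} (hμ : IsInduced σ τ μ)
    (f : Play (X × Y) → ℝ) (hf : Continuous f) : Integrable f μ := by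
  haveI := hμ.1
  have hseq : ∀ k : ℕ, ∃ φ : Play (X × Y) → ℝ, Measurable φ ∧
      ∀ᵐ w ∂μ, |f w - φ w| ≤ 1 / (k + 1) := by
    intro k
    have hpos : (0:ℝ) < 1 / (k + 1) := by positivity
    obtain ⟨n, g, hg⟩ := f_approx f hf hpos
    obtain ⟨φ, hφm, _, hφae, _⟩ := exists_phi hμ n g
    refine ⟨φ, hφm, ?_⟩
    filter_upwards [hφae] with w hw
    rw [hw]
    exact hg w
  choose φ hφm hφae using hseq
  have haesm : AEStronglyMeasurable f μ := by
    refine aestronglyMeasurable_of_tendsto_ae atTop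
      (fun k => (hφm k).aestronglyMeasurable) ?_
    have hall := ae_all_iff.2 hφae
    filter_upwards [hall] with w hw
    rw [tendsto_iff_dist_tendsto_zero]
    refine squeeze_zero (fun k => dist_nonneg) (fun k => ?_)
      tendsto_one_div_add_atTop_nhds_zero_nat
    rw [Real.dist_eq, abs_sub_comm]
    exact hw k
  obtain ⟨M, _, hM⟩ := f_bound f hf
  exact ⟨haesm, HasFiniteIntegral.of_bounded (C := M)
    (Filter.Eventually.of_forall fun w => by rw [Real.norm_eq_abs]; exact hM w)⟩

lemma integral_close {σ : Strategy (X × Y) X} {τ : Strategy (X × Y) Y}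
    {μ : Measure (Play (X × Y))} (hμ : IsInduced σ τ μ)
    (f : Play (X × Y) → ℝ) (hf : Continuous f) {ε : ℝ} (n : ℕ)
    (g : List (X × Y) → ℝ) (hg : ∀ w, |f w - g (hist n w)| ≤ ε) :
    |(∫ w, f w ∂μ) - EV n g σ τ []| ≤ ε := by
  haveI := hμ.1
  obtain ⟨φ, hφm, hφi, hφae, hφint⟩ := exists_phi hμ n g
  have hfi := f_integrable hμ f hf
  have hEV : EV n g σ τ [] = ∫ w, φ w ∂μ := by
    rw [hφint, sum_cylProb_mul]
  rw [hEV, ← integral_sub hfi hφi]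
  have := norm_integral_le_of_norm_le_const (μ := μ) (f := fun w => f w - φ w) (C := ε)
    (by filter_upwards [hφae] with w hw
        rw [Real.norm_eq_abs, hw]
        exact hg w)
  rwa [measureReal_def, measure_univ, ENNReal.toReal_one, mul_one, Real.norm_eq_abs] at this

end Final

/-- Blackwell games with continuous payoff functions are determined. -/
theorem stmt_15 {X Y : Type} [Fintype X] [Nonempty X] [Fintype Y] [Nonempty Y]
    [MeasurableSpace X] [MeasurableSpace Y]
    [TopologicalSpace X] [DiscreteTopology X]
    [TopologicalSpace Y] [DiscreteTopology Y]
    (μ : Strategy (X × Y) X → Strategy (X × Y) Y → Measure (Play (X × Y)))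
    (hμ : ∀ σ τ, IsInduced σ τ (μ σ τ))
    (f : Play (X × Y) → ℝ) (hf : Continuous f) :
    (⨆ σ, ⨅ τ, ∫ w, f w ∂(μ σ τ)) = ⨅ τ, ⨆ σ, ∫ w, f w ∂(μ σ τ) := by
  set I : Strategy (X × Y) X → Strategy (X × Y) Y → ℝ :=
    fun σ τ => ∫ w, f w ∂(μ σ τ) with hI
  obtain ⟨M, hM0, hM⟩ := f_bound f hf
  have hIbound : ∀ σ τ, |I σ τ| ≤ M := by
    intro σ τ
    haveI := (hμ σ τ).1
    have := norm_integral_le_of_norm_le_const (μ := μ σ τ) (f := f) (C := M)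
      (Filter.Eventually.of_forall fun w => by rw [Real.norm_eq_abs]; exact hM w)
    rwa [measureReal_def, measure_univ, ENNReal.toReal_one, mul_one, Real.norm_eq_abs] at this
  have hbddA : ∀ τ, BddAbove (Set.range fun σ => I σ τ) := by
    intro τ
    exact ⟨M, by rintro _ ⟨σ, rfl⟩; exact (abs_le.1 (hIbound σ τ)).2⟩
  have hbddB : ∀ σ, BddBelow (Set.range fun τ => I σ τ) := by
    intro σ
    exact ⟨-M, by rintro _ ⟨τ, rfl⟩; exact (abs_le.1 (hIbound σ τ)).1⟩
  have hbddInf : BddAbove (Set.range fun σ => ⨅ τ, I σ τ) := by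
    refine ⟨M, ?_⟩
    rintro _ ⟨σ, rfl⟩
    obtain ⟨τ0⟩ : Nonempty (Strategy (X × Y) Y) := ⟨fun _ => PMF.pure (Classical.arbitrary Y)⟩
    exact le_trans (ciInf_le (hbddB σ) τ0) ((abs_le.1 (hIbound σ τ0)).2)
  have hbddSup : BddBelow (Set.range fun τ => ⨆ σ, I σ τ) := by
    refine ⟨-M, ?_⟩
    rintro _ ⟨τ, rfl⟩
    obtain ⟨σ0⟩ : Nonempty (Strategy (X × Y) X) := ⟨fun _ => PMF.pure (Classical.arbitrary X)⟩
    exact le_trans ((abs_le.1 (hIbound σ0 τ)).1) (le_ciSup (hbddA τ) σ0)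
  refine le_antisymm ?_ ?_
  · refine le_ciInf fun τ => ?_
    exact ciSup_mono (hbddA τ) fun σ => ciInf_le (hbddB σ) τ
  · -- hard direction, via ε-optimal strategies in the finite approximation game
    have key : ∀ ε : ℝ, 0 < ε → (⨅ τ, ⨆ σ, I σ τ) ≤ (⨆ σ, ⨅ τ, I σ τ) + ε := by
      intro ε hε
      have hε4 : 0 < ε / 4 := by linarith
      obtain ⟨n, g, hg⟩ := f_approx f hf hε4
      obtain ⟨σs, hσs⟩ := EV_lower n g hε4 0
      obtain ⟨τs, hτs⟩ := EV_upper n g hε4 0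
      have h1 : (⨅ τ, ⨆ σ, I σ τ) ≤ ⨆ σ, I σ τs := ciInf_le hbddSup τs
      have h2 : (⨆ σ, I σ τs) ≤ gval n g [] + ε / 2 := by
        refine ciSup_le fun σ' => ?_
        have ha := integral_close (hμ σ' τs) f hf n g hg
        have hb := hτs σ' [] rfl
        have := abs_le.1 ha
        show I σ' τs ≤ _
        rw [hI]
        linarith [this.2]
      have h3 : gval n g [] - ε / 2 ≤ ⨅ τ, I σs τ := by
        refine le_ciInf fun τ' => ?_
        have ha := integral_close (hμ σs τ') f hf n g hg
        have hb := hσs τ' [] rfl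
        have := abs_le.1 ha
        show _ ≤ I σs τ'
        rw [hI]
        linarith [this.1]
      have h4 : (⨅ τ, I σs τ) ≤ ⨆ σ, ⨅ τ, I σ τ := le_ciSup hbddInf σs
      linarith
    by_contra hcon
    push_neg at hcon
    have hcon' : (⨆ σ, ⨅ τ, I σ τ) < ⨅ τ, ⨆ σ, I σ τ := hcon
    have := key (((⨅ τ, ⨆ σ, I σ τ) - (⨆ σ, ⨅ τ, I σ τ)) / 2) (by linarith)
    linarith
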